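/- For the symmetric 4-qubit state |ψ_tet⟩ = (1/√3)|0000⟩ + (1/√6)(|0111⟩+|1011⟩+|1101⟩+|1110⟩), the two-qubit reduced density matrix ρ₂ has purity Tr(ρ₂²) = 1/3, so the 2-anticoherence measure 𝓐₂ = (3/2)(1 − 1/3) = 1. -/
import Mathlib


open Matrix Complex

/-- The symmetric 4-qubit tetrahedral state
(1/√3)|0000⟩ + (1/√6)(|0111⟩+|1011⟩+|1101⟩+|1110⟩). -/
noncomputable def psiTet4 : Fin 2 → Fin 2 → Fin 2 → Fin 2 → ℂ :=
  fun a b c d =>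
    if (a : ℕ) + b + c + d = 0 then (1 / Real.sqrt 3 : ℂ)
    else if (a : ℕ) + b + c + d = 3 then (1 / Real.sqrt 6 : ℂ)
    else 0

/-- The two-qubit reduced density matrix of `psiTet4` (trace over qubits 3,4). -/
noncomputable def rho2Tet : Matrix (Fin 2 × Fin 2) (Fin 2 × Fin 2) ℂ :=
  fun p q => ∑ c : Fin 2, ∑ d : Fin 2,
    psiTet4 p.1 p.2 c d * (starRingEnd ℂ) (psiTet4 q.1 q.2 c d)

theorem psiTet4_rho2_purity :
    (rho2Tet * rho2Tet).trace = 1 / 3 ∧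
    (3 / 2 : ℂ) * (1 - (rho2Tet * rho2Tet).trace) = 1 := by
  have h : (rho2Tet * rho2Tet).trace = 1 / 3 := by
    have h3 : (Real.sqrt 3 : ℂ) * Real.sqrt 3 = 3 := by
      rw [← Complex.ofReal_mul, Real.mul_self_sqrt] <;> norm_num
    have h6 : (Real.sqrt 6 : ℂ) * Real.sqrt 6 = 6 := by
      rw [← Complex.ofReal_mul, Real.mul_self_sqrt] <;> norm_num
    simp only [Matrix.trace, Matrix.diag, Matrix.mul_apply, rho2Tet, psiTet4,
      Fintype.sum_prod_type, Fin.sum_univ_two, Fin.isValue, Fin.val_zero, Fin.val_one]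
    norm_num
    field_simp
    ring_nf
    have p3 : ((Real.sqrt 3 : ℂ))^4 = 9 := by
      rw [show ((Real.sqrt 3:ℂ))^4 = (↑(Real.sqrt 3) * ↑(Real.sqrt 3))^2 by ring, h3]; norm_num
    have p6 : ((Real.sqrt 6 : ℂ))^4 = 36 := by
      rw [show ((Real.sqrt 6:ℂ))^4 = (↑(Real.sqrt 6) * ↑(Real.sqrt 6))^2 by ring, h6]; norm_num
    have p68 : ((Real.sqrt 6 : ℂ))^8 = 1296 := by
      rw [show ((Real.sqrt 6:ℂ))^8 = ((↑(Real.sqrt 6):ℂ)^4)^2 by ring, p6]; norm_num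
    simp only [inv_pow, p3, p6, p68]
    norm_num
  exact ⟨h, by rw [h]; norm_num⟩
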